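/- arXiv:1602.00318 — 2 statements merged into one kernel-verified Lean document; each statement's English description precedes it below -/
import Mathlib

section
/- In PSL₂(ℂ) with MAN⁻N coordinates, if (m_θ a_t n⁻_w n_z)·(m_{θ₁} a_{t₁} n⁻_{w₁} n_{z₁}) = m_{θ₀} a_{t₀} n⁻_{w₀} n_{z₀}, then t₀ = t + t₁ + 2·log|1 + e^{−t₁−2iθ₁} w₁ z| and z₀ = e^{−t₁−2iθ₁} z (1 + e^{−t₁−2iθ₁} w₁ z)^{−1} + z₁, provided 1 + e^{−t₁−2iθ₁} w₁ z ≠ 0. -/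
open Matrix

noncomputable def Mm (θ : ℝ) : Matrix (Fin 2) (Fin 2) ℂ :=
  !![Complex.exp (θ * Complex.I), 0; 0, Complex.exp (-(θ * Complex.I))]

noncomputable def Am (t : ℝ) : Matrix (Fin 2) (Fin 2) ℂ :=
  !![(Real.exp (t / 2) : ℂ), 0; 0, (Real.exp (-t / 2) : ℂ)]

def Nm (z : ℂ) : Matrix (Fin 2) (Fin 2) ℂ := !![1, z; 0, 1]

def Nminus (w : ℂ) : Matrix (Fin 2) (Fin 2) ℂ := !![1, 0; w, 1]

/-!
Write `m_θ a_t = diag(α, α⁻¹)` with `α = exp(iθ + t/2)`, so that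
`m_θ a_t n⁻_w n_z = [[α, α z], [α⁻¹ w, α⁻¹ (w z + 1)]]`. The first row of the product of two such
matrices is `α α₁ · (q, z₁ q + k z)` with `k = α₁⁻² = exp(-t₁ - 2iθ₁)` and `q = 1 + k w₁ z`,
while the first row of `m_{θ₀} a_{t₀} n⁻_{w₀} n_{z₀}` is `α₀ · (1, z₀)`. Comparing the `(0,0)`
entries gives `α₀ = α α₁ q` (so `q ≠ 0`), whose absolute values give `t₀`; dividing the `(0,1)`
entries by them gives `z₀ = z₁ + k z / q`.
-/

open Complex

noncomputable def maScalar (θ t : ℝ) : ℂ := cexp (θ * I + t / 2)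

lemma maScalar_ne_zero (θ t : ℝ) : maScalar θ t ≠ 0 := Complex.exp_ne_zero _

lemma norm_maScalar (θ t : ℝ) : ‖maScalar θ t‖ = Real.exp (t / 2) := by
  simp [maScalar, Complex.norm_exp]

lemma inv_maScalar_sq (θ t : ℝ) :
    (maScalar θ t)⁻¹ ^ 2 = cexp (-(t : ℂ) - 2 * (θ : ℂ) * I) := by
  rw [maScalar, ← Complex.exp_neg, ← Complex.exp_nat_mul]
  ring_nf

lemma Mm_mul_Am (θ t : ℝ) :
    Mm θ * Am t = !![maScalar θ t, 0; 0, (maScalar θ t)⁻¹] := by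
  simp only [Mm, Am, maScalar, Matrix.mul_fin_two, ← Complex.exp_neg, Complex.ofReal_exp,
    ← Complex.exp_add, mul_zero, zero_mul, add_zero, zero_add]
  push_cast
  ring_nf

lemma Nminus_mul_Nm (w z : ℂ) : Nminus w * Nm z = !![1, z; w, w * z + 1] := by
  simp [Nminus, Nm]

lemma Mm_mul_Am_mul_Nminus_mul_Nm (θ t : ℝ) (w z : ℂ) :
    Mm θ * Am t * Nminus w * Nm z =
      !![maScalar θ t, maScalar θ t * z;
        (maScalar θ t)⁻¹ * w, (maScalar θ t)⁻¹ * (w * z + 1)] := by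
  rw [Matrix.mul_assoc, Nminus_mul_Nm, Mm_mul_Am, Matrix.mul_fin_two]
  simp

section Product

variable (θ t θ₁ t₁ : ℝ) (w z w₁ z₁ : ℂ)

lemma man_mul_man_apply_zero_zero :
    ((Mm θ * Am t * Nminus w * Nm z) * (Mm θ₁ * Am t₁ * Nminus w₁ * Nm z₁)) 0 0 =
      maScalar θ t * maScalar θ₁ t₁ * (1 + cexp (-(t₁ : ℂ) - 2 * (θ₁ : ℂ) * I) * w₁ * z) := by
  rw [Mm_mul_Am_mul_Nminus_mul_Nm, Mm_mul_Am_mul_Nminus_mul_Nm, ← inv_maScalar_sq]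
  simp only [Matrix.mul_fin_two, Matrix.of_apply, Matrix.cons_val', Matrix.cons_val_zero,
    Matrix.empty_val', Matrix.cons_val_fin_one]
  field_simp [maScalar_ne_zero]

lemma man_mul_man_apply_zero_one :
    ((Mm θ * Am t * Nminus w * Nm z) * (Mm θ₁ * Am t₁ * Nminus w₁ * Nm z₁)) 0 1 =
      maScalar θ t * maScalar θ₁ t₁ *
        (z₁ * (1 + cexp (-(t₁ : ℂ) - 2 * (θ₁ : ℂ) * I) * w₁ * z) +
          cexp (-(t₁ : ℂ) - 2 * (θ₁ : ℂ) * I) * z) := by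
  rw [Mm_mul_Am_mul_Nminus_mul_Nm, Mm_mul_Am_mul_Nminus_mul_Nm, ← inv_maScalar_sq]
  simp only [Matrix.mul_fin_two, Matrix.of_apply, Matrix.cons_val', Matrix.cons_val_zero,
    Matrix.cons_val_one, Matrix.empty_val', Matrix.cons_val_fin_one]
  field_simp [maScalar_ne_zero]
  ring

end Product

theorem stmt_10_general (θ θ₁ θ₀ t t₁ t₀ : ℝ) (z z₁ z₀ w w₁ w₀ : ℂ)
    (heq : (Mm θ * Am t * Nminus w * Nm z) * (Mm θ₁ * Am t₁ * Nminus w₁ * Nm z₁)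
        = Mm θ₀ * Am t₀ * Nminus w₀ * Nm z₀) :
    t₀ = t + t₁ + 2 * Real.log (‖
        (1 + Complex.exp (-(t₁ : ℂ) - 2 * (θ₁ : ℂ) * Complex.I) * w₁ * z)‖) ∧
    z₀ = Complex.exp (-(t₁ : ℂ) - 2 * (θ₁ : ℂ) * Complex.I) * z *
        (1 + Complex.exp (-(t₁ : ℂ) - 2 * (θ₁ : ℂ) * Complex.I) * w₁ * z)⁻¹ + z₁ := by
  set k := cexp (-(t₁ : ℂ) - 2 * (θ₁ : ℂ) * I)
  set q := 1 + k * w₁ * z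
  have h00 : maScalar θ t * maScalar θ₁ t₁ * q = maScalar θ₀ t₀ := by
    have h := congrFun₂ heq 0 0
    rwa [man_mul_man_apply_zero_zero, Mm_mul_Am_mul_Nminus_mul_Nm] at h
  have h01 : maScalar θ t * maScalar θ₁ t₁ * (z₁ * q + k * z) = maScalar θ₀ t₀ * z₀ := by
    have h := congrFun₂ heq 0 1
    rwa [man_mul_man_apply_zero_one, Mm_mul_Am_mul_Nminus_mul_Nm] at h
  have hq : q ≠ 0 := right_ne_zero_of_mul (h00 ▸ maScalar_ne_zero θ₀ t₀)
  have hnorm : Real.exp (t / 2) * Real.exp (t₁ / 2) * ‖q‖ = Real.exp (t₀ / 2) := by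
    simpa only [norm_mul, norm_maScalar] using congrArg norm h00
  constructor
  · have hlog := congrArg Real.log hnorm
    rw [Real.log_mul (by positivity) (norm_ne_zero_iff.mpr hq), Real.log_mul (by positivity)
      (by positivity), Real.log_exp, Real.log_exp, Real.log_exp] at hlog
    linarith
  · have hα : maScalar θ t * maScalar θ₁ t₁ ≠ 0 :=
      mul_ne_zero (maScalar_ne_zero _ _) (maScalar_ne_zero _ _)
    rw [← h00] at h01
    have hz : q * z₀ = z₁ * q + k * z := mul_left_cancel₀ hα (by linear_combination -h01)
    field_simp
    linear_combination hz

/-- `MAN⁻N` multiplication formula: the `A`-component `t₀` and `N`-component `z₀` of the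
product `(m_θ a_t n⁻_w n_z)(m_{θ₁} a_{t₁} n⁻_{w₁} n_{z₁})`. -/
theorem stmt_10 (θ θ₁ θ₀ t t₁ t₀ : ℝ) (z z₁ z₀ w w₁ w₀ : ℂ)
    (hne : 1 + Complex.exp (-(t₁ : ℂ) - 2 * (θ₁ : ℂ) * Complex.I) * w₁ * z ≠ 0)
    (heq : (Mm θ * Am t * Nminus w * Nm z) * (Mm θ₁ * Am t₁ * Nminus w₁ * Nm z₁)
        = Mm θ₀ * Am t₀ * Nminus w₀ * Nm z₀) :
    t₀ = t + t₁ + 2 * Real.log (‖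
        (1 + Complex.exp (-(t₁ : ℂ) - 2 * (θ₁ : ℂ) * Complex.I) * w₁ * z)‖) ∧
    z₀ = Complex.exp (-(t₁ : ℂ) - 2 * (θ₁ : ℂ) * Complex.I) * z *
        (1 + Complex.exp (-(t₁ : ℂ) - 2 * (θ₁ : ℂ) * Complex.I) * w₁ * z)⁻¹ + z₁ :=
  stmt_10_general θ θ₁ θ₀ t t₁ t₀ z z₁ z₀ w w₁ w₀ heq
end

section
/- Let μ be a locally finite Borel measure on ℂ and α > 1. Suppose there is a constant c such that μ(B(ξ, ε)) ≤ c·ε^α for every ε ∈ (0,1) and every ξ in the support of μ. Let E ⊂ ℂ be a bounded Borel set whose boundary ∂E is a rectifiable curve of finite length L. Then there is a constant C (depending on c, L, and the Besicovitch constant of ℝ²) such that for all small ε > 0, μ({z : dist(z, ∂E) ≤ ε}) ≤ C·ε^{α−1}. -/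
/-!
Parametrize `∂E` by an `L`-Lipschitz map on `[0, 1]`: sampling it at the `N + 1 ≈ L / ε` points
`k / N` covers `∂E` by `O(1/ε)` balls of radius `ε`, hence its `ε`-neighbourhood by as many balls
of radius `2ε`. A ball of positive mass meets the support of `μ`, so it lies in a ball of twice
the radius centred in the support, whose mass is `≤ c (4ε)^α`. Summing gives `O(ε^{α-1})`.
-/

open MeasureTheory Metric Set
open scoped ENNReal

variable {X : Type*} [PseudoMetricSpace X]

lemma LipschitzOnWith.image_Icc_subset_biUnion_closedBall {L : NNReal} {γ : ℝ → X}
    (hγ : LipschitzOnWith L γ (Icc 0 1)) {N : ℕ} (hN : 0 < N) :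
    γ '' Icc 0 1 ⊆ ⋃ k ∈ Finset.range (N + 1), closedBall (γ (k / N)) (L / N) := by
  rintro _ ⟨t, ht, rfl⟩
  have hN' : (0 : ℝ) < N := Nat.cast_pos.2 hN
  set k := ⌊t * N⌋₊
  have hk_le : (k : ℝ) ≤ t * N := Nat.floor_le (mul_nonneg ht.1 hN'.le)
  have hk_gt : t * N < k + 1 := Nat.lt_floor_add_one _
  have hkN : k ≤ N := Nat.cast_le.1 (hk_le.trans (mul_le_of_le_one_left hN'.le ht.2))
  have hk_mem : (k / N : ℝ) ∈ Icc 0 1 :=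
    ⟨by positivity, (div_le_one hN').2 (Nat.cast_le.2 hkN)⟩
  have htk : |t - k / N| ≤ 1 / N := by
    rw [show t - k / N = (t * N - k) / N by field_simp, abs_div, abs_of_pos hN',
      div_le_div_iff_of_pos_right hN', abs_of_nonneg (by linarith)]
    linarith
  refine mem_biUnion (Finset.mem_range.2 (Nat.lt_succ_of_le hkN)) ?_
  calc dist (γ t) (γ (k / N)) ≤ L * dist t (k / N) := hγ.dist_le_mul t ht _ hk_mem
    _ ≤ L * (1 / N) := mul_le_mul_of_nonneg_left htk L.coe_nonneg
    _ = L / N := mul_one_div _ _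

lemma LipschitzOnWith.exists_finset_card_le_image_Icc_subset {L : NNReal} {γ : ℝ → X}
    (hγ : LipschitzOnWith L γ (Icc 0 1)) {ε : ℝ} (hε : 0 < ε) :
    ∃ s : Finset X, (s.card : ℝ) ≤ L / ε + 3 ∧ γ '' Icc 0 1 ⊆ ⋃ x ∈ s, closedBall x ε := by
  classical
  set N := ⌈(L : ℝ) / ε⌉₊ + 1
  have hN : (0 : ℝ) < N := by positivity
  have hceil : (⌈(L : ℝ) / ε⌉₊ : ℝ) < L / ε + 1 := Nat.ceil_lt_add_one (by positivity)
  have hLN : (L : ℝ) / N ≤ ε := by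
    rw [div_le_iff₀ hN, ← div_le_iff₀' hε]
    exact (Nat.le_ceil _).trans (by simp [N])
  refine ⟨(Finset.range (N + 1)).image fun k : ℕ => γ (k / N), ?_, ?_⟩
  · have hcard : ((Finset.range (N + 1)).image fun k : ℕ => γ (k / N)).card ≤ N + 1 :=
      Finset.card_image_le.trans (Finset.card_range _).le
    calc _ ≤ ((N + 1 : ℕ) : ℝ) := by exact_mod_cast hcard
      _ ≤ L / ε + 3 := by push_cast [N]; linarith
  · refine (hγ.image_Icc_subset_biUnion_closedBall (N := N) (Nat.succ_pos _)).trans ?_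
    simp only [Finset.set_biUnion_finset_image]
    exact iUnion₂_mono fun k _ => closedBall_subset_closedBall hLN

lemma IsCompact.setOf_infDist_le_subset_biUnion_closedBall {S : Set X} (hS : IsCompact S)
    (hne : S.Nonempty) {s : Finset X} {r : ℝ} (hcov : S ⊆ ⋃ x ∈ s, closedBall x r) (δ : ℝ) :
    {z | infDist z S ≤ δ} ⊆ ⋃ x ∈ s, closedBall x (δ + r) := by
  intro z hz
  obtain ⟨w, hwS, hw⟩ := hS.exists_infDist_eq_dist hne z
  obtain ⟨x, hx, hwx⟩ := mem_iUnion₂.1 (hcov hwS)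
  refine mem_iUnion₂.2 ⟨x, hx, ?_⟩
  calc dist z x ≤ dist z w + dist w x := dist_triangle _ _ _
    _ ≤ δ + r := add_le_add (hw ▸ hz) hwx

lemma measure_closedBall_le_of_forall_mem_support [MeasurableSpace X]
    [HereditarilyLindelofSpace X] {μ : Measure X} {r : ℝ} {m : ℝ≥0∞}
    (h : ∀ ξ ∈ μ.support, μ (closedBall ξ (2 * r)) ≤ m) (x : X) :
    μ (closedBall x r) ≤ m := by
  rcases eq_zero_or_pos (μ (closedBall x r)) with h0 | hpos
  · simp [h0]
  obtain ⟨ξ, hξx, hξ⟩ := Measure.nonempty_inter_support_of_pos hpos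
  refine (measure_mono (closedBall_subset_closedBall' ?_)).trans (h ξ hξ)
  rw [dist_comm]
  linarith [mem_closedBall.1 hξx]

lemma measure_closedBall_ne_zero_of_mem_support [MeasurableSpace X] {μ : Measure X}
    {ξ : X} (hξ : ξ ∈ μ.support) {r : ℝ} (hr : 0 < r) : μ (closedBall ξ r) ≠ 0 :=
  ((Measure.mem_support_iff_forall ξ).1 hξ _ (closedBall_mem_nhds ξ hr)).ne'

theorem stmt_13_general (μ : MeasureTheory.Measure ℂ)
    (α c : ℝ) (hc : 0 < c)
    (hball : ∀ ξ : ℂ, (∀ r > (0:ℝ), μ (Metric.closedBall ξ r) ≠ 0) →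
      ∀ ε : ℝ, 0 < ε → ε < 1 → μ (Metric.closedBall ξ ε) ≤ ENNReal.ofReal (c * ε ^ α))
    (E : Set ℂ)
    (L : NNReal) (γ : ℝ → ℂ) (hγ : LipschitzOnWith L γ (Set.Icc 0 1))
    (hbd : frontier E = γ '' Set.Icc 0 1) :
    ∃ C > (0:ℝ), ∃ ε₀ > (0:ℝ), ∀ ε : ℝ, 0 < ε → ε < ε₀ →
      μ {z : ℂ | Metric.infDist z (frontier E) ≤ ε} ≤ ENNReal.ofReal (C * ε ^ (α - 1)) := by
  refine ⟨c * 4 ^ α * (L + 1), by positivity, 1 / 4, by norm_num, fun ε hε hε₀ => ?_⟩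
  obtain ⟨s, hs_card, hs_cov⟩ := hγ.exists_finset_card_le_image_Icc_subset hε
  rw [hbd]
  have hcov := (isCompact_Icc.image_of_continuousOn hγ.continuousOn)
    |>.setOf_infDist_le_subset_biUnion_closedBall ((nonempty_Icc.2 zero_le_one).image γ) hs_cov ε
  have hball' (x : ℂ) : μ (closedBall x (ε + ε)) ≤ ENNReal.ofReal (c * (4 * ε) ^ α) :=
    measure_closedBall_le_of_forall_mem_support (fun ξ hξ => by
      convert hball ξ (fun r hr => measure_closedBall_ne_zero_of_mem_support hξ hr)
        (4 * ε) (by positivity) (by linarith) using 3; ring) x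
  have hεα : ε ^ α = ε * ε ^ (α - 1) := by
    rw [Real.rpow_sub hε, Real.rpow_one, mul_div_cancel₀ _ hε.ne']
  calc μ {z | infDist z (γ '' Icc 0 1) ≤ ε}
      ≤ ∑ x ∈ s, μ (closedBall x (ε + ε)) :=
        (measure_mono hcov).trans (measure_biUnion_finset_le _ _)
    _ ≤ s.card * ENNReal.ofReal (c * (4 * ε) ^ α) := by
        simpa using Finset.sum_le_card_nsmul s _ _ fun x _ => hball' x
    _ = ENNReal.ofReal (s.card * (c * (4 * ε) ^ α)) := by
        rw [ENNReal.ofReal_mul (Nat.cast_nonneg _), ENNReal.ofReal_natCast]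
    _ ≤ ENNReal.ofReal (c * 4 ^ α * (L + 1) * ε ^ (α - 1)) := by
        refine ENNReal.ofReal_le_ofReal ?_
        calc (s.card : ℝ) * (c * (4 * ε) ^ α) ≤ (L / ε + 3) * (c * (4 * ε) ^ α) := by
              gcongr
          _ = c * 4 ^ α * (L + 3 * ε) * ε ^ (α - 1) := by
              rw [Real.mul_rpow (by norm_num) hε.le, hεα]; field_simp
          _ ≤ c * 4 ^ α * (L + 1) * ε ^ (α - 1) := by gcongr; linarith

/-- If a locally finite Borel measure `μ` on `ℂ` satisfies `μ(B(ξ, ε)) ≤ c ε^α` (with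
`α > 1`) at every point `ξ` of its support, and `E ⊂ ℂ` is a bounded Borel set whose
boundary is a rectifiable curve, then the measure of the `ε`-neighborhood of `∂E` is
`O(ε^{α-1})`. -/
theorem stmt_13 (μ : MeasureTheory.Measure ℂ) [MeasureTheory.IsLocallyFiniteMeasure μ]
    (α c : ℝ) (hα : 1 < α) (hc : 0 < c)
    (hball : ∀ ξ : ℂ, (∀ r > (0:ℝ), μ (Metric.closedBall ξ r) ≠ 0) →
      ∀ ε : ℝ, 0 < ε → ε < 1 → μ (Metric.closedBall ξ ε) ≤ ENNReal.ofReal (c * ε ^ α))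
    (E : Set ℂ) (hE : Bornology.IsBounded E)
    (L : NNReal) (γ : ℝ → ℂ) (hγ : LipschitzOnWith L γ (Set.Icc 0 1))
    (hbd : frontier E = γ '' Set.Icc 0 1) :
    ∃ C > (0:ℝ), ∃ ε₀ > (0:ℝ), ∀ ε : ℝ, 0 < ε → ε < ε₀ →
      μ {z : ℂ | Metric.infDist z (frontier E) ≤ ε} ≤ ENNReal.ofReal (C * ε ^ (α - 1)) :=
  stmt_13_general μ α c hc hball E L γ hγ hbd
end
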